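/- arXiv:1707.05406 — 5 statements merged into one kernel-verified Lean document; each statement's English description precedes it below -/
import Mathlib

section
/- Let $r, m$ and $a_1,\ldots,a_r,b_1,\ldots,b_r$ be positive integers, and let $X=\prod_{i=1}^r K[a_i,b_i]$ be the direct product of the balanced complete multipartite graphs $K[a_i,b_i]$. Then the number of cliques of order $m$ in $X$ equals $\frac{1}{m!}\prod_{k=1}^m\prod_{i=1}^r \mathcal{S}_{k-1}(a_i,b_i)$; equivalently, $m!$ times the number of $m$-cliques of $X$ equals $\prod_{k=1}^m\prod_{i=1}^r \mathcal{S}_{k-1}(a_i,b_i)$. -/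
/-!
Both sides count ordered `m`-cliques, i.e. graph homomorphisms `K_m →g X`: every `m`-clique has
exactly `m!` enumerations. A homomorphism into a direct product is a family of homomorphisms into
the factors, and a homomorphism `K_m →g K[a,b]` is an injective choice of `m` parts together with
an arbitrary position in each, of which there are `b (b-1) ⋯ (b-m+1) · a^m = ∏_{k<m} a (b-k)`.
-/

/-- The balanced complete `b`-partite graph with partite sets of size `a`:
vertices are pairs `(partite set, position within the set)`, and two vertices
are adjacent iff they lie in different partite sets. -/
def balancedMultipartite (a b : ℕ) : SimpleGraph (Fin b × Fin a) where
  Adj u v := u.1 ≠ v.1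
  symm := ⟨fun _ _ h => h.symm⟩
  loopless := ⟨fun _ h => h rfl⟩

/-- The direct (tensor) product of a nonempty family of graphs:
two tuples are adjacent iff they are adjacent in every coordinate. -/
def directProd {r : ℕ} (hr : 0 < r) {V : Fin r → Type*}
    (G : ∀ i, SimpleGraph (V i)) : SimpleGraph (∀ i, V i) where
  Adj f g := ∀ i, (G i).Adj (f i) (g i)
  symm := ⟨fun _ _ h i => (h i).symm⟩
  loopless := ⟨fun _ h => (G ⟨0, hr⟩).loopless.irrefl _ (h ⟨0, hr⟩)⟩

open Finset Nat

namespace SimpleGraph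

variable {V : Type*} {G : SimpleGraph V} {m : ℕ}

lemma isNClique_image_top_hom [DecidableEq V] (f : (⊤ : SimpleGraph (Fin m)) →g G) :
    G.IsNClique m (univ.image f) := by
  rw [isNClique_iff, card_image_of_injective _ f.injective_of_top_hom, Finset.card_fin,
    coe_image, coe_univ, Set.image_univ]
  refine ⟨?_, rfl⟩
  rintro _ ⟨j, rfl⟩ _ ⟨k, rfl⟩ hne
  exact f.map_adj fun hjk => hne (congrArg f hjk)

noncomputable def IsNClique.topHomImageEquiv [DecidableEq V] {s : Finset V}
    (hs : G.IsNClique m s) :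
    {f : (⊤ : SimpleGraph (Fin m)) →g G // univ.image f = s} ≃ (Fin m ≃ s) where
  toFun f := Equiv.ofBijective (fun j => ⟨f.1 j, f.2.subset (mem_image_of_mem _ (mem_univ j))⟩) <|
    (Fintype.bijective_iff_injective_and_card _).2
      ⟨fun _ _ h => f.1.injective_of_top_hom (congrArg Subtype.val h), by simp [hs.card_eq]⟩
  invFun e := ⟨⟨fun j => e j, fun hjk => hs.isClique (e _).2 (e _).2
      fun h => hjk (e.injective (Subtype.ext h))⟩, by
    ext x
    simp only [RelHom.coeFn_mk, mem_image, mem_univ, true_and]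
    exact ⟨fun ⟨j, hj⟩ => hj ▸ (e j).2, fun hx => ⟨e.symm ⟨x, hx⟩, by simp⟩⟩⟩
  left_inv _ := rfl
  right_inv _ := Equiv.ext fun _ => rfl

theorem card_top_hom_eq_factorial_mul_card_cliqueFinset [Fintype V] [DecidableEq V]
    [DecidableRel G.Adj] :
    Fintype.card ((⊤ : SimpleGraph (Fin m)) →g G) = m ! * #(G.cliqueFinset m) := by
  let cliqueOf (f : (⊤ : SimpleGraph (Fin m)) →g G) : G.cliqueFinset m :=
    ⟨univ.image f, mem_cliqueFinset_iff.2 (isNClique_image_top_hom f)⟩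
  have card_fiber (s : G.cliqueFinset m) : Fintype.card {f // cliqueOf f = s} = m ! := by
    rw [Fintype.card_congr (Equiv.subtypeEquivRight fun _ => Subtype.ext_iff),
      Fintype.card_congr (mem_cliqueFinset_iff.1 s.2).topHomImageEquiv, Fintype.card_equiv
      (Fintype.equivFinOfCardEq _).symm, Fintype.card_fin]
    simp [(mem_cliqueFinset_iff.1 s.2).card_eq]
  rw [← Fintype.card_congr (Equiv.sigmaFiberEquiv cliqueOf), Fintype.card_sigma]
  simp [card_fiber, mul_comm]

end SimpleGraph

open SimpleGraph

def directProd.homEquiv {W : Type*} {H : SimpleGraph W} {r : ℕ} (hr : 0 < r)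
    {V : Fin r → Type*} (G : ∀ i, SimpleGraph (V i)) :
    (H →g directProd hr G) ≃ ∀ i, H →g G i where
  toFun f i := ⟨fun w => f w i, fun h => f.map_adj h i⟩
  invFun F := ⟨fun w i => F i w, fun h i => (F i).map_adj h⟩
  left_inv _ := rfl
  right_inv _ := rfl

instance (a b : ℕ) : DecidableRel (balancedMultipartite a b).Adj :=
  fun u v => inferInstanceAs (Decidable (u.1 ≠ v.1))

def balancedMultipartite.topHomEquiv (α : Type*) (a b : ℕ) :
    ((⊤ : SimpleGraph α) →g balancedMultipartite a b) ≃ (α ↪ Fin b) × (α → Fin a) where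
  toFun f := (⟨fun x => (f x).1, fun _ _ h => by_contra fun hne => f.map_adj hne h⟩,
    fun x => (f x).2)
  invFun p := ⟨fun x => (p.1 x, p.2 x), fun h => p.1.injective.ne h⟩
  left_inv _ := rfl
  right_inv _ := rfl

theorem balancedMultipartite.card_top_hom (m a b : ℕ) :
    Fintype.card ((⊤ : SimpleGraph (Fin m)) →g balancedMultipartite a b)
      = b.descFactorial m * a ^ m := by
  rw [Fintype.card_congr (topHomEquiv (Fin m) a b), Fintype.card_prod,
    Fintype.card_embedding_eq, Fintype.card_fun]
  simp

theorem Nat.descFactorial_mul_pow_eq_prod_range (a b m : ℕ) :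
    b.descFactorial m * a ^ m = ∏ k ∈ range m, a * (b - k) := by
  rw [prod_mul_distrib, prod_const, card_range, descFactorial_eq_prod_range, mul_comm]

theorem cliques_of_directProd_multipartite_general (r m : ℕ) (hr : 0 < r)
    (a b : Fin r → ℕ) :
    Nat.factorial m *
      {s : Finset (∀ i : Fin r, Fin (b i) × Fin (a i)) |
        (directProd hr (fun i => balancedMultipartite (a i) (b i))).IsNClique m s}.ncard
      = ∏ k ∈ Finset.range m, ∏ i : Fin r, a i * (b i - k) := by
  classical
  set X := directProd hr fun i => balancedMultipartite (a i) (b i)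
  have hcliques : {s | X.IsNClique m s} = ↑(X.cliqueFinset m) := by
    ext
    simp
  rw [hcliques, Set.ncard_coe_finset, ← card_top_hom_eq_factorial_mul_card_cliqueFinset,
    Fintype.card_congr (directProd.homEquiv hr _), Fintype.card_pi, prod_comm]
  refine prod_congr rfl fun i _ => ?_
  rw [balancedMultipartite.card_top_hom, descFactorial_mul_pow_eq_prod_range]

/-- The number of cliques of order `m` in `X = ∏ K[aᵢ,bᵢ]` is
`(1/m!) ∏_{k=1}^{m} ∏_{i=1}^{r} 𝒮_{k-1}(aᵢ,bᵢ)`, where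
`𝒮_m(x,y) = max{x(y-m),0}` (here expressed by truncated ℕ-subtraction). -/
theorem cliques_of_directProd_multipartite (r m : ℕ) (hr : 0 < r) (hm : 0 < m)
    (a b : Fin r → ℕ) (ha : ∀ i, 0 < a i) (hb : ∀ i, 0 < b i) :
    Nat.factorial m *
      {s : Finset (∀ i : Fin r, Fin (b i) × Fin (a i)) |
        (directProd hr (fun i => balancedMultipartite (a i) (b i))).IsNClique m s}.ncard
      = ∏ k ∈ Finset.range m, ∏ i : Fin r, a i * (b i - k) :=
  cliques_of_directProd_multipartite_general r m hr a b
end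

section
/- Let $r, m$ and $a_1,\ldots,a_r,b_1,\ldots,b_r$ be positive integers, let $X=\prod_{i=1}^r K[a_i,b_i]$, and let $D$ be a clique of order $m$ in $X$. Then the number of vertices of $X$ adjacent to every vertex of $D$ is exactly $\prod_{i=1}^r \mathcal{S}_m(a_i,b_i)$. -/
/-!
A common neighbour of `D` in `∏ K[aᵢ,bᵢ]` is exactly a tuple whose `i`-th coordinate is a common
neighbour of the `i`-th projection of `D`, for every `i`. In `K[a,b]` a clique meets `m` distinct
parts, so its common neighbours are the `a (b - m)` vertices in the remaining parts. Since
adjacent vertices of the product differ in every coordinate, each projection of an `m`-clique is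
again an `m`-clique, and the count multiplies.
-/

open Finset

theorem Set.ncard_univ_pi {ι : Type*} [Fintype ι] {α : ι → Type*} [∀ i, Finite (α i)]
    (s : ∀ i, Set (α i)) : (Set.univ.pi s).ncard = ∏ i, (s i).ncard := by
  classical
  have := Fintype.ofFinite
  have hpi : Set.univ.pi s = ↑(Fintype.piFinset fun i => (s i).toFinset) := by
    ext z
    simp
  rw [hpi, Set.ncard_coe_finset, Fintype.card_piFinset]
  simp only [Set.ncard_eq_toFinset_card']

def SimpleGraph.commonNbhd {V : Type*} (G : SimpleGraph V) (s : Set V) : Set V :=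
  {z | ∀ w ∈ s, G.Adj z w}

open SimpleGraph

namespace directProd

variable {r : ℕ} (hr : 0 < r) {V : Fin r → Type*} (G : ∀ i, SimpleGraph (V i))

theorem adj_iff {f g : ∀ i, V i} : (directProd hr G).Adj f g ↔ ∀ i, (G i).Adj (f i) (g i) :=
  Iff.rfl

theorem commonNbhd_eq_pi (D : Set (∀ i, V i)) :
    (directProd hr G).commonNbhd D =
      Set.univ.pi fun i => (G i).commonNbhd (Function.eval i '' D) := by
  ext z
  simp only [commonNbhd, adj_iff, Set.mem_ofPred_eq, Set.mem_pi, Set.mem_univ, true_implies,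
    Set.forall_mem_image, Function.eval]
  exact ⟨fun h i w hw => h w hw i, fun h w hw i => h i hw⟩

variable {hr G}

theorem isNClique_image_eval [∀ i, DecidableEq (V i)] {n : ℕ} {D : Finset (∀ i, V i)}
    (hD : (directProd hr G).IsNClique n D) (i : Fin r) :
    (G i).IsNClique n (D.image (Function.eval i)) := by
  have adj_of_ne : ∀ w ∈ D, ∀ w' ∈ D, w ≠ w' → (G i).Adj (w i) (w' i) :=
    fun w hw w' hw' hne => hD.isClique hw hw' hne i
  refine ⟨?_, ?_⟩
  · rw [coe_image]
    rintro _ ⟨w, hw, rfl⟩ _ ⟨w', hw', rfl⟩ hne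
    exact adj_of_ne w hw w' hw' fun h => hne (h ▸ rfl)
  · rw [card_image_of_injOn, hD.card_eq]
    intro w hw w' hw' heq
    by_contra hne
    exact (adj_of_ne w hw w' hw' hne).ne heq

end directProd

namespace balancedMultipartite

variable {a b : ℕ}

theorem card_image_fst_of_isNClique {n : ℕ} {T : Finset (Fin b × Fin a)}
    (hT : (balancedMultipartite a b).IsNClique n T) : #(T.image Prod.fst) = n := by
  rw [card_image_of_injOn, hT.card_eq]
  intro u hu v hv huv
  by_contra hne
  exact hT.isClique hu hv hne huv

theorem ncard_commonNbhd (T : Finset (Fin b × Fin a)) :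
    ((balancedMultipartite a b).commonNbhd T).ncard = a * (b - #(T.image Prod.fst)) := by
  have hT : (balancedMultipartite a b).commonNbhd T =
      ((T.image Prod.fst)ᶜ ×ˢ (univ : Finset (Fin a)) : Finset _) := by
    ext x
    simp only [commonNbhd, balancedMultipartite, mem_coe, Set.mem_ofPred_eq, mem_product,
      mem_compl, mem_image, mem_univ, and_true, not_exists, not_and]
    exact ⟨fun h w hw hx => h w hw hx.symm, fun h w hw hx => h w hw hx.symm⟩
  rw [hT, Set.ncard_coe_finset, card_product, card_compl, Fintype.card_fin, card_univ,
    Fintype.card_fin, mul_comm]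

end balancedMultipartite

theorem common_neighbors_of_clique_general (r m : ℕ) (hr : 0 < r)
    (a b : Fin r → ℕ)
    (D : Finset (∀ i : Fin r, Fin (b i) × Fin (a i)))
    (hD : (directProd hr (fun i => balancedMultipartite (a i) (b i))).IsNClique m D) :
    {z : ∀ i : Fin r, Fin (b i) × Fin (a i) |
        ∀ w ∈ D, (directProd hr (fun i => balancedMultipartite (a i) (b i))).Adj z w}.ncard
      = ∏ i : Fin r, a i * (b i - m) := by
  classical
  change ((directProd hr fun i => balancedMultipartite (a i) (b i)).commonNbhd ↑D).ncard = _
  rw [directProd.commonNbhd_eq_pi, Set.ncard_univ_pi]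
  refine prod_congr rfl fun i _ => ?_
  rw [← coe_image, balancedMultipartite.ncard_commonNbhd,
    balancedMultipartite.card_image_fst_of_isNClique (directProd.isNClique_image_eval hD i)]

/-- If `D` is a clique of order `m` in `X = ∏ K[aᵢ,bᵢ]`, then the number of
vertices of `X` adjacent to every vertex of `D` is `∏ᵢ 𝒮_m(aᵢ,bᵢ)`, where
`𝒮_m(x,y) = max{x(y-m),0}` (truncated ℕ-subtraction). -/
theorem common_neighbors_of_clique (r m : ℕ) (hr : 0 < r) (hm : 0 < m)
    (a b : Fin r → ℕ) (ha : ∀ i, 0 < a i) (hb : ∀ i, 0 < b i)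
    (D : Finset (∀ i : Fin r, Fin (b i) × Fin (a i)))
    (hD : (directProd hr (fun i => balancedMultipartite (a i) (b i))).IsNClique m D) :
    {z : ∀ i : Fin r, Fin (b i) × Fin (a i) |
        ∀ w ∈ D, (directProd hr (fun i => balancedMultipartite (a i) (b i))).Adj z w}.ncard
      = ∏ i : Fin r, a i * (b i - m) :=
  common_neighbors_of_clique_general r m hr a b D hD
end

section
/- Let $n\ge 2$ and $m\ge 1$ be integers. The number of cliques of order $m$ in the unitary Cayley graph $G_{\mathbb{Z}/n\mathbb{Z}}$ equals $\prod_{k=1}^m \frac{S_{k-1}(n)}{k}$; equivalently, $m!$ times the number of $m$-cliques of $G_{\mathbb{Z}/n\mathbb{Z}}$ equals $\prod_{k=1}^m S_{k-1}(n)$. -/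
/-- The unitary Cayley graph of `ℤ/nℤ`: two distinct vertices are adjacent
iff their difference is a unit of `ℤ/nℤ`. -/
def unitaryCayley (n : ℕ) : SimpleGraph (ZMod n) where
  Adj u v := u ≠ v ∧ IsUnit (u - v)
  symm := ⟨fun _ _ h => ⟨h.1.symm, by rw [← neg_sub]; exact h.2.neg⟩⟩
  loopless := ⟨fun _ h => h.1 rfl⟩

/-- The `r`-th Schemmel totient function:
`S_r(n) = #{k : 1 ≤ k ≤ n, gcd(k+i,n) = 1 for all 0 ≤ i ≤ r-1}`. -/
def schemmel (r n : ℕ) : ℕ :=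
  ((Finset.Icc 1 n).filter (fun k => ∀ i < r, Nat.gcd (k + i) n = 1)).card


/-!
Extending an `m`-clique by a vertex adjacent to all of it produces each `(m+1)`-clique exactly
`m + 1` times, so `(m+1) c_{m+1} = ∑_t #N(t)` over the `m`-cliques `t`, where
`N(t) = {y | y - x is a unit for all x ∈ t}`. It remains to see `#N(t) = S_k(n)` for a clique `t`
of size `k`. Both `#N(t)` and `S_k(n) = #N({0, -1, …, -(k-1)})` are multiplicative in `n` by the
Chinese remainder theorem, and modulo `p^e` whether `y - x` is a unit depends only on residues
mod `p`. The elements of a clique are distinct mod `p`, so `k ≤ p` and `0, -1, …, -(k-1)` are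
distinct mod `p` as well; hence both sets `N` have `p^(e-1) (p - k)` elements.
-/

open Finset

theorem SimpleGraph.succ_mul_card_cliqueFinset_succ {V : Type*} [Fintype V] [DecidableEq V]
    (G : SimpleGraph V) [DecidableRel G.Adj] (m : ℕ) :
    (m + 1) * #(G.cliqueFinset (m + 1)) =
      ∑ s ∈ G.cliqueFinset m, #{v | ∀ x ∈ s, G.Adj v x} := by
  rw [mul_comm, ← sum_const_nat fun s hs => (G.mem_cliqueFinset_iff.mp hs).card_eq,
    ← card_sigma, ← card_sigma]
  refine card_nbij' (fun p => ⟨p.1.erase p.2, p.2⟩) (fun q => ⟨insert q.2 q.1, q.2⟩)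
    ?_ ?_ ?_ ?_
  · rintro ⟨s, v⟩ h
    simp only [mem_coe, mem_sigma, G.mem_cliqueFinset_iff, mem_filter, mem_univ, true_and]
      at h ⊢
    exact ⟨h.1.erase_of_mem h.2, fun x hx =>
      h.1.isClique h.2 (mem_of_mem_erase hx) (ne_of_mem_erase hx).symm⟩
  · rintro ⟨t, v⟩ h
    simp only [mem_coe, mem_sigma, G.mem_cliqueFinset_iff, mem_filter, mem_univ, true_and]
      at h ⊢
    exact ⟨h.1.insert h.2, mem_insert_self v t⟩
  · rintro ⟨s, v⟩ h
    simp only [mem_coe, mem_sigma] at h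
    simp [insert_erase h.2]
  · rintro ⟨t, v⟩ h
    simp only [mem_coe, mem_sigma, mem_filter, mem_univ, true_and] at h
    simp [erase_insert fun hv => (h.2 v hv).ne rfl]

theorem AddMonoidHom.natCard_preimage {G H : Type*} [AddGroup G] [AddGroup H] (f : G →+ H)
    (hf : Function.Surjective f) (A : Set H) :
    Nat.card (f ⁻¹' A) = Nat.card A * Nat.card f.ker := by
  let σ := Function.surjInv hf
  have hσ : ∀ a, f (σ a) = a := Function.surjInv_eq hf
  rw [← Nat.card_prod]
  exact Nat.card_congr
    { toFun y := (⟨f y, y.2⟩, ⟨-σ (f y) + y, by simp [hσ]⟩)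
      invFun a := ⟨σ a.1 + a.2, by simp [hσ, f.mem_ker.mp a.2.2]⟩
      left_inv y := by simp
      right_inv a := by ext <;> simp [hσ, f.mem_ker.mp a.2.2] }

theorem ZMod.isUnit_iff_castHom_ne_zero {p e : ℕ} [Fact p.Prime] (he : e ≠ 0)
    (z : ZMod (p ^ e)) : IsUnit z ↔ castHom (dvd_pow_self p he) (ZMod p) z ≠ 0 := by
  have hp : p.Prime := Fact.out
  have : NeZero (p ^ e) := ⟨pow_ne_zero e hp.ne_zero⟩
  rw [← natCast_zmod_val z, isUnit_iff_coprime, map_natCast, Ne, natCast_eq_zero_iff,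
    Nat.coprime_pow_right_iff (Nat.pos_of_ne_zero he), Nat.coprime_comm,
    hp.coprime_iff_not_dvd]

section UnitNeighbors

variable {R S T : Type*} [CommRing R] [CommRing S] [CommRing T]

def unitNeighbors (t : Set R) : Set R := {y | ∀ x ∈ t, IsUnit (y - x)}

variable (R) in
def negRange (k : ℕ) : Set R := (fun i : ℕ => -(i : R)) '' Set.Iio k

theorem mem_unitNeighbors_negRange {k : ℕ} {y : R} :
    y ∈ unitNeighbors (negRange R k) ↔ ∀ i < k, IsUnit (y + i) := by
  simp [unitNeighbors, negRange]

theorem image_negRange (f : R →+* S) (k : ℕ) : f '' negRange R k = negRange S k := by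
  simp [negRange, Set.image_image]

theorem ncard_negRange_zmod {n k : ℕ} (hk : k ≤ n) : (negRange (ZMod n) k).ncard = k := by
  rw [negRange, Set.InjOn.ncard_image, Set.ncard_Iio_nat]
  intro i hi j hj hij
  simpa [ZMod.val_cast_of_lt (lt_of_lt_of_le hi hk), ZMod.val_cast_of_lt (lt_of_lt_of_le hj hk)]
    using congrArg ZMod.val (neg_inj.mp hij)

theorem ncard_unitNeighbors_of_ringEquiv_prod (e : R ≃+* S × T) (t : Set R) :
    (unitNeighbors t).ncard =
      (unitNeighbors ((RingHom.fst S T).comp (e : R →+* S × T) '' t)).ncard *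
        (unitNeighbors ((RingHom.snd S T).comp (e : R →+* S × T) '' t)).ncard := by
  have himage : e '' unitNeighbors t =
      unitNeighbors ((RingHom.fst S T).comp (e : R →+* S × T) '' t) ×ˢ
        unitNeighbors ((RingHom.snd S T).comp (e : R →+* S × T) '' t) := by
    ext z
    obtain ⟨y, rfl⟩ := e.surjective z
    simp only [e.injective.mem_set_image, Set.mem_prod, unitNeighbors, Set.mem_ofPred_eq,
      Set.forall_mem_image, ← forall₂_and]
    refine forall₂_congr fun x _ => ?_
    rw [← MulEquiv.isUnit_map e, map_sub, Prod.isUnit_iff, Prod.fst_sub, Prod.snd_sub]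
    exact Iff.rfl
  rw [← Set.ncard_prod, ← himage, Set.ncard_image_of_injective _ e.injective]

section Pairwise

variable [Nontrivial S] {t : Set R} (ht : t.Pairwise fun x y => IsUnit (x - y)) (f : R →+* S)
include ht

theorem Set.Pairwise.injOn_of_isUnit_sub : Set.InjOn f t := by
  intro x hx y hy hxy
  by_contra hne
  have := (ht hx hy hne).map f
  rw [map_sub, hxy, sub_self] at this
  exact not_isUnit_zero this

theorem Set.Pairwise.image_of_isUnit_sub : (f '' t).Pairwise fun x y => IsUnit (x - y) := by
  rw [(ht.injOn_of_isUnit_sub f).pairwise_image]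
  exact fun x hx y hy hne => by simpa using (ht hx hy hne).map f

end Pairwise

end UnitNeighbors

theorem ncard_unitNeighbors_primePow_eq_of_ncard_image_eq {p e : ℕ} [Fact p.Prime] (he : e ≠ 0)
    {s t : Set (ZMod (p ^ e))}
    (hst : (ZMod.castHom (dvd_pow_self p he) (ZMod p) '' s).ncard =
      (ZMod.castHom (dvd_pow_self p he) (ZMod p) '' t).ncard) :
    (unitNeighbors s).ncard = (unitNeighbors t).ncard := by
  set π := ZMod.castHom (dvd_pow_self p he) (ZMod p)
  have hπ : Function.Surjective π := ZMod.ringHom_surjective π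
  have hcard : ∀ u : Set (ZMod (p ^ e)), (unitNeighbors u).ncard =
      (Nat.card (ZMod p) - (π '' u).ncard) * Nat.card (π : ZMod (p ^ e) →+ ZMod p).ker := by
    intro u
    have hu : unitNeighbors u = π ⁻¹' (π '' u)ᶜ := by
      ext y
      simp only [unitNeighbors, Set.mem_preimage, Set.mem_compl_iff, Set.mem_image, not_exists,
        not_and, Set.mem_ofPred_eq, ZMod.isUnit_iff_castHom_ne_zero he, map_sub, sub_ne_zero]
      exact forall₂_congr fun x _ => ne_comm
    rw [hu, ← Nat.card_coe_set_eq]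
    refine (AddMonoidHom.natCard_preimage (π : ZMod (p ^ e) →+ ZMod p) hπ _).trans ?_
    rw [Nat.card_coe_set_eq, Set.ncard_compl]
  rw [hcard, hcard, hst]

theorem ncard_unitNeighbors_eq_negRange {n : ℕ} (hn : n ≠ 0) {t : Set (ZMod n)}
    (ht : t.Pairwise fun x y => IsUnit (x - y)) :
    (unitNeighbors t).ncard = (unitNeighbors (negRange (ZMod n) t.ncard)).ncard := by
  induction n using Nat.recOnPosPrimePosCoprime with
  | zero => exact absurd rfl hn
  | one =>
    have hall : ∀ s : Set (ZMod 1), unitNeighbors s = Set.univ := fun s =>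
      Set.eq_univ_of_forall fun y x _ => isUnit_of_subsingleton _
    rw [hall, hall]
  | prime_pow p e hp he =>
    have : Fact p.Prime := ⟨hp⟩
    set π := ZMod.castHom (dvd_pow_self p he.ne') (ZMod p)
    have hcard : (π '' t).ncard = t.ncard := (ht.injOn_of_isUnit_sub π).ncard_image
    have hle : t.ncard ≤ p := hcard ▸ (Set.ncard_le_card _).trans (Nat.card_zmod p).le
    refine ncard_unitNeighbors_primePow_eq_of_ncard_image_eq he.ne' ?_
    rw [hcard, image_negRange, ncard_negRange_zmod hle]
  | coprime a b ha hb hab iha ihb =>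
    have : Fact (1 < a) := ⟨ha⟩
    have : Fact (1 < b) := ⟨hb⟩
    set e := ZMod.chineseRemainder hab
    set f₁ := (RingHom.fst (ZMod a) (ZMod b)).comp (e : ZMod (a * b) →+* ZMod a × ZMod b)
    set f₂ := (RingHom.snd (ZMod a) (ZMod b)).comp (e : ZMod (a * b) →+* ZMod a × ZMod b)
    rw [ncard_unitNeighbors_of_ringEquiv_prod e, ncard_unitNeighbors_of_ringEquiv_prod e,
      iha (by omega) (ht.image_of_isUnit_sub f₁), ihb (by omega) (ht.image_of_isUnit_sub f₂),
      (ht.injOn_of_isUnit_sub f₁).ncard_image, (ht.injOn_of_isUnit_sub f₂).ncard_image,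
      image_negRange f₁, image_negRange f₂]

theorem schemmel_eq_ncard_unitNeighbors_negRange (k n : ℕ) [NeZero n] :
    schemmel k n = (unitNeighbors (negRange (ZMod n) k)).ncard := by
  rw [schemmel]
  set P : ℕ → Prop := fun j => ∀ i < k, Nat.gcd (j + i) n = 1
  have hP : ∀ j : ℕ, P j ↔ ∀ i < k, IsUnit ((j : ZMod n) + i) := fun j => by
    simp only [P, ← Nat.cast_add, ZMod.isUnit_iff_coprime, Nat.Coprime]
  have hperiodic : Function.Periodic P n := fun j => by
    simp only [hP, Nat.cast_add, ZMod.natCast_self, add_zero]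
  have himage : unitNeighbors (negRange (ZMod n) k) =
      (Nat.cast : ℕ → ZMod n) '' ↑((range n).filter P) := by
    ext y
    rw [mem_unitNeighbors_negRange]
    refine ⟨fun hy => ⟨y.val, ?_, ZMod.natCast_zmod_val y⟩, ?_⟩
    · simpa [hP, ZMod.val_lt] using hy
    · rintro ⟨j, hj, rfl⟩
      exact (hP j).mp (mem_filter.mp hj).2
  have hinj : Set.InjOn (Nat.cast : ℕ → ZMod n) ↑(range n) := fun i hi j hj hij => by
    simpa [ZMod.val_cast_of_lt (mem_range.mp hi), ZMod.val_cast_of_lt (mem_range.mp hj)]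
      using congrArg ZMod.val hij
  rw [himage, (hinj.mono (coe_subset.mpr (filter_subset _ _))).ncard_image, Set.ncard_coe_finset,
    ← Nat.count_eq_card_filter_range, ← Nat.filter_Ico_card_eq_of_periodic 1 n P hperiodic,
    add_comm, Ico_add_one_right_eq_Icc]

theorem unitaryCayley_adj_iff {n : ℕ} [Nontrivial (ZMod n)] {u v : ZMod n} :
    (unitaryCayley n).Adj u v ↔ IsUnit (u - v) :=
  ⟨And.right, fun h => ⟨sub_ne_zero.mp h.ne_zero, h⟩⟩

theorem card_commonNeighbors_unitaryCayley {n m : ℕ} [Fact (1 < n)]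
    [DecidableRel (unitaryCayley n).Adj] {s : Finset (ZMod n)}
    (hs : s ∈ (unitaryCayley n).cliqueFinset m) :
    #{v | ∀ x ∈ s, (unitaryCayley n).Adj v x} = schemmel m n := by
  have hclique := SimpleGraph.mem_cliqueFinset_iff.mp hs
  have hpairwise : (s : Set (ZMod n)).Pairwise fun x y => IsUnit (x - y) :=
    fun x hx y hy hne => unitaryCayley_adj_iff.mp (hclique.isClique hx hy hne)
  have hneighbors : (({v | ∀ x ∈ s, (unitaryCayley n).Adj v x} : Finset (ZMod n)) :
      Set (ZMod n)) = unitNeighbors (s : Set (ZMod n)) := by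
    ext v
    simp [unitNeighbors, unitaryCayley_adj_iff]
  rw [← Set.ncard_coe_finset, hneighbors, ncard_unitNeighbors_eq_negRange (NeZero.ne n) hpairwise,
    Set.ncard_coe_finset, hclique.card_eq, schemmel_eq_ncard_unitNeighbors_negRange]

theorem cliques_of_unitaryCayley_general (n m : ℕ) (hn : 2 ≤ n) :
    Nat.factorial m *
      {s : Finset (ZMod n) | (unitaryCayley n).IsNClique m s}.ncard
      = ∏ k ∈ Finset.range m, schemmel k n := by
  classical
  have : Fact (1 < n) := ⟨hn⟩
  rw [← SimpleGraph.cliqueSet, ← SimpleGraph.coe_cliqueFinset, Set.ncard_coe_finset]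
  induction m with
  | zero => simp [SimpleGraph.cliqueFinset, filter_eq']
  | succ m ih =>
    calc (m + 1).factorial * #((unitaryCayley n).cliqueFinset (m + 1))
        = m.factorial * ((m + 1) * #((unitaryCayley n).cliqueFinset (m + 1))) := by
          rw [Nat.factorial_succ]; ring
      _ = m.factorial * #((unitaryCayley n).cliqueFinset m) * schemmel m n := by
          rw [SimpleGraph.succ_mul_card_cliqueFinset_succ,
            sum_congr rfl fun s hs => card_commonNeighbors_unitaryCayley hs, sum_const,
            smul_eq_mul, mul_assoc]
      _ = ∏ k ∈ Finset.range (m + 1), schemmel k n := by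
          rw [ih, prod_range_succ]

/-- The number of cliques of order `m` in `G_{ℤ/nℤ}` equals
`∏_{k=1}^{m} S_{k-1}(n)/k`; equivalently, `m!` times the number of
`m`-cliques equals `∏_{k=1}^{m} S_{k-1}(n)`. -/
theorem cliques_of_unitaryCayley (n m : ℕ) (hn : 2 ≤ n) (hm : 1 ≤ m) :
    Nat.factorial m *
      {s : Finset (ZMod n) | (unitaryCayley n).IsNClique m s}.ncard
      = ∏ k ∈ Finset.range m, schemmel k n :=
  cliques_of_unitaryCayley_general n m hn
end

section
/- For every integer $n\ge 2$, the clique number of the unitary Cayley graph $G_{\mathbb{Z}/n\mathbb{Z}}$ (the largest $m$ such that $G_{\mathbb{Z}/n\mathbb{Z}}$ contains a clique of order $m$) equals the smallest prime factor of $n$. -/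
/-!
Reducing modulo a divisor `d ≠ 1` of `n` sends units to units, hence adjacent vertices to
distinct residues: it is a proper `d`-colouring, so every clique has at most `d` vertices.
Taking `d = p`, the smallest prime factor, gives the upper bound. Conversely, the residues
`0, 1, …, p - 1` form a clique, since every difference of two of them has absolute value
in `(0, p)` and is therefore coprime to `n`.
-/

namespace unitaryCayley

theorem adj_iff_isUnit {n : ℕ} (hn : n ≠ 1) {u v : ZMod n} :
    (unitaryCayley n).Adj u v ↔ IsUnit (u - v) :=
  have : Nontrivial (ZMod n) := ZMod.nontrivial_iff.mpr hn
  ⟨And.right, fun h => ⟨sub_ne_zero.mp h.ne_zero, h⟩⟩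

theorem colorable_of_dvd {n d : ℕ} [NeZero d] (hd : d ≠ 1) (hdn : d ∣ n) :
    (unitaryCayley n).Colorable d := by
  have : Nontrivial (ZMod d) := ZMod.nontrivial_iff.mpr hd
  let reduce := ZMod.castHom hdn (ZMod d)
  have hproper : ∀ {u v : ZMod n}, (unitaryCayley n).Adj u v → reduce u ≠ reduce v :=
    fun huv => sub_ne_zero.mp <| map_sub reduce _ _ ▸ (huv.2.map reduce).ne_zero
  simpa using (SimpleGraph.Coloring.mk reduce hproper).colorable

theorem adj_natCast_of_lt_minFac {n a b : ℕ} (ha : a < n.minFac) (hb : b < n.minFac)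
    (hab : a ≠ b) : (unitaryCayley n).Adj a b := by
  have hn : n ≠ 1 := by rintro rfl; rw [Nat.minFac_one] at ha hb; omega
  wlog hba : b < a generalizing a b
  · exact (this hb ha hab.symm (by omega)).symm
  rw [adj_iff_isUnit hn, ← Nat.cast_sub hba.le, ZMod.isUnit_iff_coprime]
  exact (Nat.coprime_of_lt_minFac (by omega) (by omega)).symm

theorem isNClique_image_range_minFac (n : ℕ) :
    (unitaryCayley n).IsNClique n.minFac ((Finset.range n.minFac).image Nat.cast) := by
  refine ⟨?_, ?_⟩
  · simpa [SimpleGraph.isClique_iff, Set.Pairwise] using fun a ha b hb hne =>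
      adj_natCast_of_lt_minFac ha hb fun hab => hne (congrArg _ hab)
  · rw [Finset.card_image_of_injOn, Finset.card_range]
    intro a ha b hb hab
    by_contra hne
    exact (adj_natCast_of_lt_minFac (Finset.mem_range.mp ha) (Finset.mem_range.mp hb) hne).ne hab

end unitaryCayley

/-- The clique number of `G_{ℤ/nℤ}` — the largest `m` such that `G_{ℤ/nℤ}`
contains a clique of order `m` — equals the smallest prime factor of `n`. -/
theorem cliqueNumber_of_unitaryCayley (n : ℕ) (hn : 2 ≤ n) :
    IsGreatest {m : ℕ | ∃ s : Finset (ZMod n), (unitaryCayley n).IsNClique m s}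
      (Nat.minFac n) := by
  refine ⟨⟨_, unitaryCayley.isNClique_image_range_minFac n⟩, ?_⟩
  rintro m ⟨s, hs⟩
  have : NeZero n.minFac := ⟨(Nat.minFac_pos n).ne'⟩
  have hcol := unitaryCayley.colorable_of_dvd (Nat.minFac_prime (by omega)).ne_one
    (Nat.minFac_dvd n)
  exact hs.card_eq ▸ hs.isClique.card_le_of_colorable hcol
end

section
/- For every nonnegative integer $r$, the $r$-th Schemmel totient function is multiplicative: if $a$ and $b$ are positive integers with $\gcd(a,b)=1$, then $S_r(ab)=S_r(a)\,S_r(b)$. -/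
def shiftUnits (R : Type*) [Semiring R] (r : ℕ) : Set R :=
  {x | ∀ i < r, IsUnit (x + i)}

def RingEquiv.shiftUnitsEquiv {R S : Type*} [Semiring R] [Semiring S] (e : R ≃+* S) (r : ℕ) :
    shiftUnits R r ≃ shiftUnits S r :=
  e.toEquiv.subtypeEquiv fun x => forall₂_congr fun i _ => by
    rw [← isUnit_map_iff e, map_add, map_natCast]
    rfl

def shiftUnitsProdEquiv (R S : Type*) [Semiring R] [Semiring S] (r : ℕ) :
    shiftUnits (R × S) r ≃ shiftUnits R r × shiftUnits S r :=
  (Equiv.subtypeEquivRight fun x => by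
    simp only [shiftUnits, Set.mem_ofPred_eq, Prod.isUnit_iff, Prod.fst_add, Prod.snd_add,
      Prod.fst_natCast, Prod.snd_natCast, forall_and]).trans Equiv.subtypeProdEquivProd

/-- The inverse `x ↦ (x - 1).val + 1` of the cast `Icc 1 n → ZMod n` sends `0` to `n`. -/
lemma card_shiftUnits_zmod (r n : ℕ) [NeZero n] :
    Nat.card (shiftUnits (ZMod n) r) = schemmel r n := by
  rw [schemmel, ← Nat.card_eq_finsetCard]
  symm
  refine Nat.card_congr
    { toFun := fun k => ⟨(k : ℕ), fun i hi => ?_⟩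
      invFun := fun x => ⟨((x : ZMod n) - 1).val + 1, ?_⟩
      left_inv := fun k => ?_
      right_inv := fun x => ?_ }
  · obtain ⟨k, hk⟩ := k
    rw [← Nat.cast_add, ZMod.isUnit_iff_coprime]
    exact (Finset.mem_filter.mp hk).2 i hi
  · obtain ⟨x, hx⟩ := x
    have hcast : (((x - 1).val + 1 : ℕ) : ZMod n) = x := by simp
    refine Finset.mem_filter.mpr
      ⟨Finset.mem_Icc.mpr ⟨Nat.le_add_left _ _, ZMod.val_lt _⟩, fun i hi => ?_⟩
    refine (ZMod.isUnit_iff_coprime _ n).mp ?_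
    rw [Nat.cast_add, hcast]
    exact hx i hi
  · obtain ⟨k, hk⟩ := k
    obtain ⟨hk1, hkn⟩ := Finset.mem_Icc.mp (Finset.mem_filter.mp hk).1
    ext
    simp only
    rw [← Nat.cast_one, ← Nat.cast_sub hk1, ZMod.val_cast_of_lt (by omega)]
    omega
  · ext
    simp

theorem schemmel_multiplicative_general (r a b : ℕ)
    (hab : Nat.gcd a b = 1) :
    schemmel r (a * b) = schemmel r a * schemmel r b := by
  obtain rfl | ha := eq_or_ne a 0
  · simp [schemmel]
  obtain rfl | hb := eq_or_ne b 0
  · simp [schemmel]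
  have : NeZero a := ⟨ha⟩
  have : NeZero b := ⟨hb⟩
  rw [← card_shiftUnits_zmod, ← card_shiftUnits_zmod, ← card_shiftUnits_zmod, ← Nat.card_prod]
  exact Nat.card_congr
    (((ZMod.chineseRemainder hab).shiftUnitsEquiv r).trans (shiftUnitsProdEquiv _ _ r))

/-- The Schemmel totient functions are multiplicative: if `gcd(a,b) = 1`,
then `S_r(ab) = S_r(a)·S_r(b)`. -/
theorem schemmel_multiplicative (r a b : ℕ) (ha : 0 < a) (hb : 0 < b)
    (hab : Nat.gcd a b = 1) :
    schemmel r (a * b) = schemmel r a * schemmel r b :=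
  schemmel_multiplicative_general r a b hab
end
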